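/- arXiv:2002.06726 — 2 statements merged into one kernel-verified Lean document; each statement's English description precedes it below -/
import Mathlib

section
/- Let n be a natural number, let S ⊆ (Fin n → ℝ) be a measurable set, and let f : (Fin n → ℝ) → ℝ be measurable with f(x) ≥ 0 for all x ∈ S and 0 < ∫_S f dλ < ∞ (λ the Lebesgue measure). Let A = {(x, d) ∈ (Fin n → ℝ) × ℝ : x ∈ S ∧ 0 ≤ d ∧ d ≤ f(x)} and let μ_A be the uniform probability measure on A, i.e. the Lebesgue measure of (Fin n → ℝ) × ℝ restricted to A and normalized by the measure of A. Then the pushforward of μ_A under the projection (x, d) ↦ x equals the measure on Fin n → ℝ with density x ↦ f(x) / (∫_S f dλ) with respect to Lebesgue measure restricted to S. -/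
open MeasureTheory

theorem sample_pushforward_correct
    (n : ℕ) (S : Set (Fin n → ℝ)) (hS : MeasurableSet S)
    (f : (Fin n → ℝ) → ℝ) (hf : Measurable f)
    (hf_nonneg : ∀ x ∈ S, 0 ≤ f x)
    (hf_int : IntegrableOn f S volume)
    (hf_pos : 0 < ∫ x in S, f x) :
    (Measure.map Prod.fst
        ((((volume : Measure (Fin n → ℝ)).prod (volume : Measure ℝ))
            {p : (Fin n → ℝ) × ℝ | p.1 ∈ S ∧ 0 ≤ p.2 ∧ p.2 ≤ f p.1})⁻¹ •
          (((volume : Measure (Fin n → ℝ)).prod (volume : Measure ℝ)).restrict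
            {p : (Fin n → ℝ) × ℝ | p.1 ∈ S ∧ 0 ≤ p.2 ∧ p.2 ≤ f p.1})))
      = ((volume : Measure (Fin n → ℝ)).restrict S).withDensity
          (fun x => ENNReal.ofReal (f x / ∫ y in S, f y)) := by
  set I : ℝ := ∫ y in S, f y with hI
  set A : Set ((Fin n → ℝ) × ℝ) := {p : (Fin n → ℝ) × ℝ | p.1 ∈ S ∧ 0 ≤ p.2 ∧ p.2 ≤ f p.1}
    with hA
  have hAmeas : MeasurableSet A := by
    apply MeasurableSet.inter (measurable_fst hS)
    exact (measurableSet_le measurable_const measurable_snd).inter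
      (measurableSet_le measurable_snd (hf.comp measurable_fst))
  set μ : Measure ((Fin n → ℝ) × ℝ) :=
    (volume : Measure (Fin n → ℝ)).prod (volume : Measure ℝ) with hμ
  -- key slice computation
  have key : ∀ t : Set (Fin n → ℝ), MeasurableSet t →
      μ (A ∩ Prod.fst ⁻¹' t) = ∫⁻ x in S ∩ t, ENNReal.ofReal (f x) := by
    intro t ht
    have hmeas : MeasurableSet (A ∩ Prod.fst ⁻¹' t) :=
      hAmeas.inter (measurable_fst ht)
    rw [hμ, Measure.prod_apply hmeas]
    have hslice : ∀ x, (volume : Measure ℝ) (Prod.mk x ⁻¹' (A ∩ Prod.fst ⁻¹' t))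
        = (S ∩ t).indicator (fun x => ENNReal.ofReal (f x)) x := by
      intro x
      by_cases hx : x ∈ S ∩ t
      · have : Prod.mk x ⁻¹' (A ∩ Prod.fst ⁻¹' t) = Set.Icc 0 (f x) := by
          ext d
          simp [hA, Set.mem_Icc, hx.1, hx.2, and_assoc]
        rw [this, Real.volume_Icc, Set.indicator_of_mem hx]
        simp
      · have : Prod.mk x ⁻¹' (A ∩ Prod.fst ⁻¹' t) = ∅ := by
          ext d
          simp only [Set.mem_preimage, Set.mem_inter_iff, Set.mem_setOf_eq, hA,
            Set.mem_empty_iff_false, iff_false]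
          rintro ⟨⟨h1, _, _⟩, h2⟩
          exact hx ⟨h1, h2⟩
        rw [this, Set.indicator_of_notMem hx]
        simp
    simp only [hslice]
    rw [lintegral_indicator (hS.inter ht)]
  have hIpos : (0:ℝ) < I := hf_pos
  -- the total mass
  have hμA : μ A = ENNReal.ofReal I := by
    have := key Set.univ MeasurableSet.univ
    simp only [Set.preimage_univ, Set.inter_univ] at this
    rw [this, hI, ← ofReal_integral_eq_lintegral_ofReal hf_int]
    exact (ae_restrict_iff' hS).2 (Filter.Eventually.of_forall hf_nonneg)
  ext t ht
  rw [Measure.map_apply measurable_fst ht, Measure.smul_apply,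
    Measure.restrict_apply (measurable_fst ht), Set.inter_comm,
    key t ht, withDensity_apply _ ht, Measure.restrict_restrict ht, hμA, smul_eq_mul]
  have harith : ∀ x, ENNReal.ofReal (f x / I)
      = ENNReal.ofReal (f x) * (ENNReal.ofReal I)⁻¹ := by
    intro x
    rw [div_eq_mul_inv, ENNReal.ofReal_mul' (by positivity), ENNReal.ofReal_inv_of_pos hIpos]
  simp only [harith]
  rw [lintegral_mul_const'' _ ((hf.ennreal_ofReal).aemeasurable.restrict), Set.inter_comm,
    mul_comm]
end

section
/- Let V be a finite set, let S ⊆ V, let σ : S → Bool, and let w_b : V → Bool → ℝ satisfy w_b(v, b) ≥ 0 for all v, b and w_b(v, true) + w_b(v, false) = 1 for every v ∈ V \ S. Let n be a natural number, let X ⊆ (Fin n → ℝ) be a measurable set, and let w_x : (Fin n → ℝ) → ℝ be measurable with w_x(x) ≥ 0 for all x ∈ X and ∫_X w_x dλ < ∞. Then ∑_{τ : V → Bool extending σ} (∏_{v ∈ V} w_b(v, τ(v))) · (∫_X w_x dλ) equals (∏_{v ∈ S} w_b(v, σ(v))) multiplied by the Lebesgue measure (in (Fin n → ℝ) × ℝ)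 of the set {(x, d) : x ∈ X ∧ 0 ≤ d ∧ d ≤ w_x(x)}. -/
open MeasureTheory Finset

theorem clauseWeight_correct
    {V : Type*} [Fintype V] [DecidableEq V]
    (S : Finset V) (σ : V → Bool) (w_b : V → Bool → ℝ)
    (hwb_nonneg : ∀ v b, 0 ≤ w_b v b)
    (hwb_sum : ∀ v ∈ Finset.univ \ S, w_b v true + w_b v false = 1)
    (n : ℕ) (X : Set (Fin n → ℝ)) (hX : MeasurableSet X)
    (w_x : (Fin n → ℝ) → ℝ) (hwx_meas : Measurable w_x)
    (hwx_nonneg : ∀ x ∈ X, 0 ≤ w_x x)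
    (hwx_fin : ∫⁻ x in X, ENNReal.ofReal (w_x x) < ⊤) :
    ∑ τ ∈ Finset.univ.filter (fun τ : V → Bool => ∀ v ∈ S, τ v = σ v),
        (∏ v, w_b v (τ v)) * (∫ x in X, w_x x ∂(volume : Measure (Fin n → ℝ)))
      = (∏ v ∈ S, w_b v (σ v)) *
        (((volume : Measure (Fin n → ℝ)).prod (volume : Measure ℝ))
          {p : (Fin n → ℝ) × ℝ | p.1 ∈ X ∧ 0 ≤ p.2 ∧ p.2 ≤ w_x p.1}).toReal := by
  classical
  -- The body set is the closed region between 0 and w_x over X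
  have hset : {p : (Fin n → ℝ) × ℝ | p.1 ∈ X ∧ 0 ≤ p.2 ∧ p.2 ≤ w_x p.1}
      = {p : (Fin n → ℝ) × ℝ | p.1 ∈ X ∧ p.2 ∈ Set.Icc ((fun _ => (0:ℝ)) p.1) (w_x p.1)} := by
    ext p; simp [Set.mem_Icc]
  have hmeasset : MeasurableSet {p : (Fin n → ℝ) × ℝ |
      p.1 ∈ X ∧ p.2 ∈ Set.Icc ((fun _ => (0:ℝ)) p.1) (w_x p.1)} :=
    measurableSet_region_between_cc measurable_const hwx_meas hX
  -- measure of the region = lintegral of w_x over X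
  have hvol : ((volume : Measure (Fin n → ℝ)).prod (volume : Measure ℝ))
      {p : (Fin n → ℝ) × ℝ | p.1 ∈ X ∧ 0 ≤ p.2 ∧ p.2 ≤ w_x p.1}
      = ∫⁻ x in X, ENNReal.ofReal (w_x x) := by
    rw [hset, Measure.prod_apply hmeasset]
    have h : (fun x => (volume : Measure ℝ)
        (Prod.mk x ⁻¹' {p : (Fin n → ℝ) × ℝ |
          p.1 ∈ X ∧ p.2 ∈ Set.Icc ((fun _ => (0:ℝ)) p.1) (w_x p.1)}))
        = X.indicator fun x => ENNReal.ofReal (w_x x) := by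
      funext x
      by_cases hx : x ∈ X
      · have : Prod.mk x ⁻¹' {p : (Fin n → ℝ) × ℝ |
            p.1 ∈ X ∧ p.2 ∈ Set.Icc ((fun _ => (0:ℝ)) p.1) (w_x p.1)}
            = Set.Icc 0 (w_x x) := by
          ext d; simp [hx]
        rw [this, Set.indicator_of_mem hx, Real.volume_Icc, sub_zero]
      · have : Prod.mk x ⁻¹' {p : (Fin n → ℝ) × ℝ |
            p.1 ∈ X ∧ p.2 ∈ Set.Icc ((fun _ => (0:ℝ)) p.1) (w_x p.1)}
            = ∅ := by
          ext d; simp [hx]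
        rw [this, Set.indicator_of_notMem hx, measure_empty]
    rw [h, lintegral_indicator hX _]
  -- the integral equals the toReal of the lintegral
  have hint : (∫ x in X, w_x x ∂(volume : Measure (Fin n → ℝ)))
      = (∫⁻ x in X, ENNReal.ofReal (w_x x)).toReal := by
    rw [integral_eq_lintegral_of_nonneg_ae
      ((ae_restrict_iff' hX).2 (Filter.Eventually.of_forall hwx_nonneg))
      (hwx_meas.aestronglyMeasurable.restrict)]
  -- Boolean part
  set c : V → Bool → ℝ := fun v b =>
    if v ∈ S then (if b = σ v then w_b v b else 0) else w_b v b with hc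
  have hsum : ∑ τ ∈ Finset.univ.filter (fun τ : V → Bool => ∀ v ∈ S, τ v = σ v),
      (∏ v, w_b v (τ v)) = ∏ v ∈ S, w_b v (σ v) := by
    have step1 : ∑ τ ∈ Finset.univ.filter (fun τ : V → Bool => ∀ v ∈ S, τ v = σ v),
        (∏ v, w_b v (τ v))
        = ∑ τ : V → Bool, ∏ v, c v (τ v) := by
      rw [eq_comm]
      rw [← Finset.sum_subset (Finset.filter_subset
        (fun τ : V → Bool => ∀ v ∈ S, τ v = σ v) Finset.univ)]
      · apply Finset.sum_congr rfl
        intro τ hτ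
        simp only [Finset.mem_filter] at hτ
        apply Finset.prod_congr rfl
        intro v _
        by_cases hv : v ∈ S
        · simp [hc, hv, hτ.2 v hv]
        · simp [hc, hv]
      · intro τ _ hτ
        simp only [Finset.mem_filter, Finset.mem_univ, true_and, not_forall] at hτ
        obtain ⟨v, hvS, hvne⟩ := hτ
        exact Finset.prod_eq_zero (Finset.mem_univ v) (by simp [hc, hvS, hvne])
    have step2 : ∑ τ : V → Bool, ∏ v, c v (τ v)
        = ∏ v, ∑ b : Bool, c v b := by
      rw [Finset.prod_univ_sum]
      rw [Fintype.piFinset_univ]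
    have step3 : ∏ v, (∑ b : Bool, c v b) = ∏ v ∈ S, w_b v (σ v) := by
      have : ∀ v, (∑ b : Bool, c v b) = if v ∈ S then w_b v (σ v) else 1 := by
        intro v
        by_cases hv : v ∈ S
        · cases hσ : σ v <;> simp [hc, hv, hσ, Fintype.sum_bool]
        · simp only [hc, hv, if_false, Fintype.sum_bool]
          exact hwb_sum v (by simp [hv])
      rw [Finset.prod_congr rfl (fun v _ => this v), Finset.prod_ite_mem,
        Finset.univ_inter]
    rw [step1, step2, step3]
  rw [← Finset.sum_mul, hsum, hvol, hint]
end
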